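/- arXiv:1706.08914 — 2 statements merged into one kernel-verified Lean document; each statement's English description precedes it below -/
import Mathlib

section
/- For all positive real numbers a, b, one has b/(a(a+b)) ≤ ψ_1(a) - ψ_1(a+b) ≤ (1 + 2/a)·b/(a(a+b)), where ψ_1 is the trigamma function. -/
/-!
Differentiating the Gauss limit `log Γ(x) = lim (x log n + log n! - ∑_{m ≤ n} log (x + m))` twice
(the derivatives converge uniformly on compact subintervals of `(0, ∞)`) gives
`ψ₁(x) = ∑ 1 / (x + m)²`. On the other hand `b / (a (a + b)) = 1 / a - 1 / (a + b)` is the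
difference of the telescoping series `∑ 1 / (t (t + 1))` at `t = a + m` and `t = a + b + m`, so both
bounds follow termwise: `1 / t² - 1 / (t (t + 1)) = 1 / (t² (t + 1))` is decreasing, and for
`a ≤ u ≤ v` the ratio of `1 / u² - 1 / v²` to `1 / (u (u + 1)) - 1 / (v (v + 1))` is
`(u + v) (u + 1) (v + 1) / (u v (u + v + 1)) ≤ 1 + 2 / a`.
-/

open MeasureTheory

/-- The polygamma function of order `n`: the `(n+1)`-st derivative of `log ∘ Γ`. -/
noncomputable def polygamma (n : ℕ) (z : ℝ) : ℝ :=
  iteratedDeriv (n + 1) (fun x => Real.log (Real.Gamma x)) z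

open Filter Topology Real Set

lemma summable_one_div_add_nat_sq (x : ℝ) : Summable fun m : ℕ => 1 / (x + m) ^ 2 := by
  have h := (summable_one_div_nat_add_rpow x 2).2 one_lt_two
  refine h.congr fun m => ?_
  rw [rpow_two, sq_abs, add_comm]

noncomputable def digammaSeries (x : ℝ) : ℝ :=
  -eulerMascheroniConstant + ∑' m : ℕ, (1 / ((m : ℝ) + 1) - 1 / (x + m))

lemma hasDerivAt_digammaSeries {x : ℝ} (hx : 0 < x) :
    HasDerivAt digammaSeries (∑' m : ℕ, 1 / (x + m) ^ 2) x := by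
  obtain ⟨c, hc, hcx1⟩ := exists_between (lt_min hx one_pos)
  have hcx : c < x := hcx1.trans_le (min_le_left x 1)
  have hc1 : c < 1 := hcx1.trans_le (min_le_right x 1)
  have hterm : ∀ (m : ℕ) (y : ℝ), y ∈ Ioi c →
      HasDerivAt (fun z => 1 / ((m : ℝ) + 1) - 1 / (z + m)) (1 / (y + m) ^ 2) y := by
    intro m y hy
    have hym : y + m ≠ 0 := (add_pos_of_pos_of_nonneg (hc.trans hy) m.cast_nonneg).ne'
    simpa [one_div, neg_div] using
      (((hasDerivAt_id y).add_const (m : ℝ)).fun_inv hym).const_sub (1 / ((m : ℝ) + 1))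
  have hbound : ∀ (m : ℕ) (y : ℝ), y ∈ Ioi c → ‖1 / (y + m) ^ 2‖ ≤ 1 / (c + m) ^ 2 := by
    intro m y hy
    have : c ≤ y := le_of_lt hy
    rw [norm_of_nonneg (by positivity)]
    gcongr
  have hsum_one : Summable fun m : ℕ => 1 / ((m : ℝ) + 1) - 1 / (1 + m) := by
    simp_rw [add_comm (1 : ℝ), sub_self]
    exact summable_zero
  exact (hasDerivAt_tsum_of_isPreconnected (summable_one_div_add_nat_sq c) isOpen_Ioi
    isPreconnected_Ioi hterm hbound (mem_Ioi.2 hc1) hsum_one hcx).const_add _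

noncomputable def logGammaSeqDeriv (n : ℕ) (x : ℝ) : ℝ :=
  log n - ∑ m ∈ Finset.range (n + 1), 1 / (x + m)

lemma hasDerivAt_logGammaSeq (n : ℕ) {x : ℝ} (hx : 0 < x) :
    HasDerivAt (fun y => BohrMollerup.logGammaSeq y n) (logGammaSeqDeriv n x) x := by
  have hsum : HasDerivAt (fun y : ℝ => ∑ m ∈ Finset.range (n + 1), log (y + m))
      (∑ m ∈ Finset.range (n + 1), 1 / (x + m)) x := by
    refine HasDerivAt.fun_sum fun m _ => ?_
    simpa using ((hasDerivAt_id x).add_const (m : ℝ)).log (by positivity)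
  simpa [BohrMollerup.logGammaSeq, logGammaSeqDeriv] using
    (((hasDerivAt_id x).mul_const (log n)).add_const (log n.factorial)).fun_sub hsum

lemma tendsto_log_sub_sum_range_succ :
    Tendsto (fun n : ℕ => log n - ∑ m ∈ Finset.range (n + 1), 1 / ((m : ℝ) + 1)) atTop
      (𝓝 (-eulerMascheroniConstant)) := by
  have h := tendsto_harmonic_sub_log.neg.sub tendsto_one_div_add_atTop_nhds_zero_nat
  rw [sub_zero] at h
  refine h.congr fun n => ?_
  simp only [harmonic, Finset.sum_range_succ, one_div]
  push_cast
  ring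

lemma abs_one_div_succ_sub_one_div_add_le {c d x : ℝ} (hc : 0 < c) (hc1 : c ≤ 1)
    (hx : x ∈ Ioo c d) (m : ℕ) :
    |1 / ((m : ℝ) + 1) - 1 / (x + m)| ≤ (d + 1) / c * (1 / ((m : ℝ) + 1) ^ 2) := by
  have hcm : c * ((m : ℝ) + 1) ≤ x + m := by nlinarith [hx.1, (m.cast_nonneg : (0 : ℝ) ≤ m)]
  have hxm : 0 < x + m := lt_of_lt_of_le (by positivity) hcm
  have hnum : |x - 1| ≤ d + 1 := abs_le.2 ⟨by linarith [hx.1, hx.2], by linarith [hx.2]⟩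
  rw [div_sub_div _ _ (by positivity) hxm.ne', abs_div,
    abs_of_pos (by positivity : (0 : ℝ) < ((m : ℝ) + 1) * (x + m))]
  calc |1 * (x + m) - ((m : ℝ) + 1) * 1| / (((m : ℝ) + 1) * (x + m))
      = |x - 1| / (((m : ℝ) + 1) * (x + m)) := by ring_nf
    _ ≤ (d + 1) / (((m : ℝ) + 1) * (c * ((m : ℝ) + 1))) := by
        gcongr
        linarith [hx.1, hx.2]
    _ = (d + 1) / c * (1 / ((m : ℝ) + 1) ^ 2) := by field_simp

lemma tendstoUniformlyOn_logGammaSeqDeriv {c d : ℝ} (hc : 0 < c) (hc1 : c ≤ 1) :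
    TendstoUniformlyOn logGammaSeqDeriv digammaSeries atTop (Ioo c d) := by
  have hsum : Summable fun m : ℕ => (d + 1) / c * (1 / ((m : ℝ) + 1) ^ 2) := by
    simpa [add_comm] using (summable_one_div_add_nat_sq 1).mul_left ((d + 1) / c)
  have hseries := tendstoUniformlyOn_tsum_nat hsum
    (f := fun m x => 1 / ((m : ℝ) + 1) - 1 / (x + m))
    fun m x hx => (norm_eq_abs _).trans_le (abs_one_div_succ_sub_one_div_add_le hc hc1 hx m)
  have hshift : TendstoUniformlyOn (fun n x => ∑ m ∈ Finset.range (n + 1),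
      (1 / ((m : ℝ) + 1) - 1 / (x + m))) _ atTop (Ioo c d) :=
    fun u hu => (tendsto_add_atTop_nat 1).eventually (hseries u hu)
  refine ((tendsto_log_sub_sum_range_succ.tendstoUniformlyOn_const _).add hshift).congr ?_
  filter_upwards with n x _
  simp only [logGammaSeqDeriv, Pi.add_apply, Finset.sum_sub_distrib]
  ring

lemma hasDerivAt_log_Gamma {x : ℝ} (hx : 0 < x) :
    HasDerivAt (fun y => log (Gamma y)) (digammaSeries x) x := by
  obtain ⟨c, hc, hcx1⟩ := exists_between (lt_min hx one_pos)
  have hcx : c < x := hcx1.trans_le (min_le_left x 1)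
  have hc1 : c < 1 := hcx1.trans_le (min_le_right x 1)
  exact hasDerivAt_of_tendstoUniformlyOn isOpen_Ioo
    (tendstoUniformlyOn_logGammaSeqDeriv (d := x + 1) hc hc1.le)
    (Eventually.of_forall fun n y hy => hasDerivAt_logGammaSeq n (hc.trans hy.1))
    (fun y hy => BohrMollerup.tendsto_log_gamma (hc.trans hy.1)) ⟨hcx, by linarith⟩

lemma polygamma_one_eq_tsum {x : ℝ} (hx : 0 < x) :
    polygamma 1 x = ∑' m : ℕ, 1 / (x + m) ^ 2 := by
  have hderiv : deriv (fun y => log (Gamma y)) =ᶠ[𝓝 x] digammaSeries := by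
    filter_upwards [isOpen_Ioi.mem_nhds hx] with y hy
    exact (hasDerivAt_log_Gamma hy).deriv
  rw [polygamma, iteratedDeriv_succ, iteratedDeriv_one, hderiv.deriv_eq]
  exact (hasDerivAt_digammaSeries hx).deriv

lemma hasSum_sub_succ_of_antitone {f : ℕ → ℝ} {l : ℝ} (hf : Antitone f)
    (hl : Tendsto f atTop (𝓝 l)) : HasSum (fun n => f n - f (n + 1)) (f 0 - l) := by
  rw [hasSum_iff_tendsto_nat_of_nonneg fun n => sub_nonneg.2 (hf n.le_succ)]
  simp_rw [Finset.sum_range_sub']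
  exact tendsto_const_nhds.sub hl

lemma hasSum_one_div_add_nat_sub_succ {x : ℝ} (hx : 0 < x) :
    HasSum (fun m : ℕ => 1 / (x + m) - 1 / (x + m + 1)) (1 / x) := by
  have hanti : Antitone fun m : ℕ => 1 / (x + m) := fun m n hmn => by
    have : (m : ℝ) ≤ n := Nat.cast_le.2 hmn
    dsimp only
    gcongr
  have hlim : Tendsto (fun m : ℕ => 1 / (x + m)) atTop (𝓝 0) :=
    tendsto_const_nhds.div_atTop (tendsto_atTop_add_const_left _ x tendsto_natCast_atTop_atTop)
  simpa [add_assoc] using hasSum_sub_succ_of_antitone hanti hlim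

lemma sub_one_div_succ_diff_le_one_div_sq_diff {u v : ℝ} (hu : 0 < u) (huv : u ≤ v) :
    (1 / u - 1 / (u + 1)) - (1 / v - 1 / (v + 1)) ≤ 1 / u ^ 2 - 1 / v ^ 2 := by
  have hv : 0 < v := hu.trans_le huv
  have hdefect : ∀ t : ℝ, 0 < t → 1 / t ^ 2 - (1 / t - 1 / (t + 1)) = 1 / (t ^ 2 * (t + 1)) := by
    intro t ht
    field_simp
    ring
  have : 1 / (v ^ 2 * (v + 1)) ≤ 1 / (u ^ 2 * (u + 1)) := by gcongr
  linarith [hdefect u hu, hdefect v hv]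

lemma one_div_sq_diff_le_sub_one_div_succ_diff {a u v : ℝ} (ha : 0 < a) (hau : a ≤ u)
    (huv : u ≤ v) :
    1 / u ^ 2 - 1 / v ^ 2 ≤ (1 + 2 / a) * ((1 / u - 1 / (u + 1)) - (1 / v - 1 / (v + 1))) := by
  have hu : 0 < u := ha.trans_le hau
  have hv : 0 < v := hu.trans_le huv
  have hcross : a * ((u + v) * ((u + 1) * (v + 1))) ≤ (a + 2) * ((u + v + 1) * (u * v)) := by
    have hu' : 0 ≤ v * (u - a) := mul_nonneg hv.le (sub_nonneg.2 hau)
    have hv' : 0 ≤ u * (v - a) := mul_nonneg hu.le (sub_nonneg.2 (hau.trans huv))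
    nlinarith [mul_nonneg (add_pos hu hv).le hu', mul_nonneg (add_pos hu hv).le hv',
      mul_pos (mul_pos ha hu) hv]
  have e1 : 1 / u ^ 2 - 1 / v ^ 2 = (v - u) * (u + v) / (u ^ 2 * v ^ 2) := by
    field_simp
    ring
  have e2 : (1 / u - 1 / (u + 1)) - (1 / v - 1 / (v + 1))
      = (v - u) * (u + v + 1) / ((u * (u + 1)) * (v * (v + 1))) := by
    field_simp
    ring
  have e3 : 1 + 2 / a = (a + 2) / a := by field_simp
  rw [e1, e2, e3, div_mul_div_comm, div_le_div_iff₀ (by positivity) (by positivity)]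
  nlinarith [mul_le_mul_of_nonneg_left hcross (mul_nonneg (mul_nonneg (sub_nonneg.2 huv) hu.le) hv.le)]

theorem trigamma_diff_bounds (a b : ℝ) (ha : 0 < a) (hb : 0 < b) :
    b / (a * (a + b)) ≤ polygamma 1 a - polygamma 1 (a + b) ∧
    polygamma 1 a - polygamma 1 (a + b) ≤ (1 + 2 / a) * (b / (a * (a + b))) := by
  have hab : 0 < a + b := by linarith
  have htrigamma : HasSum (fun m : ℕ => 1 / (a + m) ^ 2 - 1 / (a + b + m) ^ 2)
      (polygamma 1 a - polygamma 1 (a + b)) := by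
    rw [polygamma_one_eq_tsum ha, polygamma_one_eq_tsum hab]
    exact (summable_one_div_add_nat_sq a).hasSum.sub (summable_one_div_add_nat_sq (a + b)).hasSum
  have htelescope := (hasSum_one_div_add_nat_sub_succ ha).sub (hasSum_one_div_add_nat_sub_succ hab)
  rw [show b / (a * (a + b)) = 1 / a - 1 / (a + b) by field_simp; ring]
  have hle : ∀ m : ℕ, a + m ≤ a + b + m := fun m => by linarith
  exact ⟨hasSum_le (fun m => sub_one_div_succ_diff_le_one_div_sq_diff (by positivity) (hle m))
      htelescope htrigamma,
    hasSum_le (fun m => one_div_sq_diff_le_sub_one_div_succ_diff ha (by simp) (hle m))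
      htrigamma (htelescope.mul_left _)⟩
end

section
/- For all positive real numbers a, b, |ψ_1(a) + ψ_1(b) - 4ψ_1(a+b)| ≤ (6 + (a-b)²/min(a,b))·min(a,b)^{-2}, where ψ_1 is the trigamma function. -/
open MeasureTheory

/-!
Differentiating `Γ(x + 1) = x Γ(x)` and Legendre's duplication formula shows that `ψ₁` and
`S(x) = ∑ₙ (x + n)⁻²` both satisfy `f x = x⁻² + f (x + 1)` and `f x + f (x + 1/2) = 4 f (2x)`.
Their difference is therefore `1`-periodic, hence bounded on `(0, ∞)`, and the duplication
relation halves any bound on a bounded solution, so `ψ₁ = S`. Comparing `S` with the telescoping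
series `∑ₙ ((x + n)⁻¹ - (x + n + 1)⁻¹) = x⁻¹` gives `x⁻¹ ≤ ψ₁ x ≤ x⁻¹ + x⁻²`, and the theorem
follows from `a⁻¹ + b⁻¹ - 4 (a + b)⁻¹ = (a - b)² / (a b (a + b))`.
-/

open Real Set Filter Topology
open scoped Nat

theorem analyticAt_Gamma {x : ℝ} (hx : ∀ m : ℕ, x ≠ -m) : AnalyticAt ℝ Gamma x := by
  have h : AnalyticAt ℝ Gamma⁻¹ x := by
    refine ((Complex.differentiable_one_div_Gamma.analyticAt (x : ℂ)).re_ofReal).congr ?_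
    filter_upwards with y
    rw [Complex.Gamma_ofReal, ← Complex.ofReal_inv, Complex.ofReal_re, Pi.inv_apply]
  simpa only [inv_inv] using h.inv (inv_ne_zero (Gamma_ne_zero hx))

theorem analyticOnNhd_log_Gamma : AnalyticOnNhd ℝ (fun x => log (Gamma x)) (Ioi 0) :=
  fun x hx => (analyticAt_log (Gamma_pos_of_pos hx)).comp
    (analyticAt_Gamma fun m => by linarith [show (0 : ℝ) ≤ m from m.cast_nonneg, mem_Ioi.mp hx])

theorem polygamma_eq_iterate (n : ℕ) :
    polygamma n = deriv^[n + 1] (fun x => log (Gamma x)) :=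
  funext fun z => congrFun iteratedDeriv_eq_iterate z

theorem polygamma_zero : polygamma 0 = deriv (fun x => log (Gamma x)) :=
  polygamma_eq_iterate 0

theorem polygamma_succ (n : ℕ) : polygamma (n + 1) = deriv (polygamma n) := by
  rw [polygamma_eq_iterate, polygamma_eq_iterate, Function.iterate_succ_apply']

theorem analyticOnNhd_polygamma (n : ℕ) : AnalyticOnNhd ℝ (polygamma n) (Ioi 0) := by
  rw [polygamma_eq_iterate]
  exact analyticOnNhd_log_Gamma.iterated_deriv _

theorem differentiableAt_polygamma (n : ℕ) {x : ℝ} (hx : 0 < x) :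
    DifferentiableAt ℝ (polygamma n) x :=
  (analyticOnNhd_polygamma n x hx).differentiableAt

theorem log_Gamma_add_one {x : ℝ} (hx : 0 < x) :
    log (Gamma (x + 1)) = log (Gamma x) + log x := by
  rw [Gamma_add_one hx.ne', log_mul hx.ne' (Gamma_pos_of_pos hx).ne', add_comm]

theorem log_Gamma_add_log_Gamma_add_half {x : ℝ} (hx : 0 < x) :
    log (Gamma x) + log (Gamma (x + 1 / 2)) =
      log (2 * √π) - 2 * log 2 * x + log (Gamma (2 * x)) := by
  rw [← log_mul (Gamma_pos_of_pos hx).ne' (Gamma_pos_of_pos (by linarith)).ne',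
    Gamma_mul_Gamma_add_half, log_mul (by positivity) (by positivity),
    log_mul (Gamma_pos_of_pos (by linarith)).ne' (by positivity), log_rpow two_pos,
    log_mul two_ne_zero (by positivity)]
  ring

theorem deriv_comp_add_one_of_eventuallyEq {g h : ℝ → ℝ} {x : ℝ}
    (hg : DifferentiableAt ℝ g x) (hh : DifferentiableAt ℝ h x)
    (heq : ∀ᶠ y in 𝓝 x, g (y + 1) = g y + h y) :
    deriv g (x + 1) = deriv g x + deriv h x := by
  rw [← deriv_comp_add_const, ← deriv_add hg hh]
  exact EventuallyEq.deriv_eq heq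

theorem deriv_add_deriv_add_half_of_eventuallyEq {g : ℝ → ℝ} {x c d k : ℝ}
    (hg₁ : DifferentiableAt ℝ g x) (hg₂ : DifferentiableAt ℝ g (x + 1 / 2))
    (hg₃ : DifferentiableAt ℝ g (2 * x))
    (heq : ∀ᶠ y in 𝓝 x, g y + g (y + 1 / 2) = c + d * y + k * g (2 * y)) :
    deriv g x + deriv g (x + 1 / 2) = d + 2 * k * deriv g (2 * x) := by
  have hL : HasDerivAt (fun y => g y + g (y + 1 / 2)) (deriv g x + deriv g (x + 1 / 2)) x :=
    hg₁.hasDerivAt.add hg₂.hasDerivAt.comp_add_const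
  have hR : HasDerivAt (fun y => c + d * y + k * g (2 * y)) (d + 2 * k * deriv g (2 * x)) x := by
    have h2 : HasDerivAt (fun y => g (2 * y)) (deriv g (2 * x) * 2) x := by
      simpa [Function.comp_def] using hg₃.hasDerivAt.comp x ((hasDerivAt_id x).const_mul 2)
    exact ((((hasDerivAt_id' x).const_mul d).const_add c).fun_add (h2.const_mul k)).congr_deriv
      (by ring)
  exact (hL.congr_of_eventuallyEq (EventuallyEq.symm heq)).unique hR

theorem polygamma_add_one (n : ℕ) {x : ℝ} (hx : 0 < x) :
    polygamma n (x + 1) = polygamma n x + (-1) ^ n * n ! * x ^ (-1 - n : ℤ) := by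
  rw [← iter_deriv_inv]
  induction n generalizing x with
  | zero =>
    rw [polygamma_zero, Function.iterate_zero, id]
    refine (deriv_comp_add_one_of_eventuallyEq ((analyticOnNhd_log_Gamma x hx).differentiableAt)
      (differentiableAt_log hx.ne') ?_).trans (by rw [deriv_log])
    filter_upwards [eventually_gt_nhds hx] with y hy using log_Gamma_add_one hy
  | succ n ih =>
    rw [polygamma_succ, Function.iterate_succ_apply']
    refine deriv_comp_add_one_of_eventuallyEq (differentiableAt_polygamma n hx)
      (((analyticOnNhd_inv.iterated_deriv n) x hx.ne').differentiableAt) ?_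
    filter_upwards [eventually_gt_nhds hx] with y hy using ih hy

theorem polygamma_zero_add_polygamma_zero_add_half {x : ℝ} (hx : 0 < x) :
    polygamma 0 x + polygamma 0 (x + 1 / 2) = -2 * log 2 + 2 * polygamma 0 (2 * x) := by
  have hf : ∀ {y : ℝ}, 0 < y → DifferentiableAt ℝ (fun x => log (Gamma x)) y :=
    fun hy => (analyticOnNhd_log_Gamma _ hy).differentiableAt
  rw [polygamma_zero]
  convert deriv_add_deriv_add_half_of_eventuallyEq (c := log (2 * √π)) (k := 1)
    (hf hx) (hf (by linarith)) (hf (by linarith)) ?_ using 2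
  · ring
  · filter_upwards [eventually_gt_nhds hx] with y hy
    rw [log_Gamma_add_log_Gamma_add_half hy]
    ring

theorem polygamma_add_polygamma_add_half (n : ℕ) {x : ℝ} (hx : 0 < x) :
    polygamma (n + 1) x + polygamma (n + 1) (x + 1 / 2) =
      2 ^ (n + 2) * polygamma (n + 1) (2 * x) := by
  induction n generalizing x with
  | zero =>
    rw [polygamma_succ 0]
    convert deriv_add_deriv_add_half_of_eventuallyEq (c := -2 * log 2) (d := 0) (k := 2)
      (differentiableAt_polygamma _ hx) (differentiableAt_polygamma _ (by linarith))
      (differentiableAt_polygamma _ (by linarith)) ?_ using 1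
    · ring
    · filter_upwards [eventually_gt_nhds hx] with y hy
      rw [polygamma_zero_add_polygamma_zero_add_half hy]
      ring
  | succ n ih =>
    rw [polygamma_succ (n + 1)]
    convert deriv_add_deriv_add_half_of_eventuallyEq (c := 0) (d := 0) (k := 2 ^ (n + 2))
      (differentiableAt_polygamma _ hx) (differentiableAt_polygamma _ (by linarith))
      (differentiableAt_polygamma _ (by linarith)) ?_ using 1
    · ring
    · filter_upwards [eventually_gt_nhds hx] with y hy
      rw [ih hy]; ring

noncomputable def trigammaSeries (x : ℝ) : ℝ := ∑' n : ℕ, ((x + n) ^ 2)⁻¹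

theorem inv_sq_add_one_le_inv_sub_inv {y : ℝ} (hy : 0 < y) :
    ((y + 1) ^ 2)⁻¹ ≤ y⁻¹ - (y + 1)⁻¹ := by
  rw [inv_sub_inv hy.ne' (by positivity), add_sub_cancel_left, one_div]
  exact inv_anti₀ (by positivity) (by nlinarith)

theorem inv_sub_inv_le_inv_sq {y : ℝ} (hy : 0 < y) : y⁻¹ - (y + 1)⁻¹ ≤ (y ^ 2)⁻¹ := by
  rw [inv_sub_inv hy.ne' (by positivity), add_sub_cancel_left, one_div]
  exact inv_anti₀ (by positivity) (by nlinarith)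

theorem hasSum_inv_sub_inv_add_one {x : ℝ} (hx : 0 < x) :
    HasSum (fun n : ℕ => (x + n)⁻¹ - (x + n + 1)⁻¹) x⁻¹ := by
  rw [hasSum_iff_tendsto_nat_of_nonneg
    (fun n => sub_nonneg.2 (inv_anti₀ (by positivity) (by linarith)))]
  have hpartial (N : ℕ) : ∑ n ∈ Finset.range N, ((x + n)⁻¹ - (x + n + 1)⁻¹) = x⁻¹ - (x + N)⁻¹ := by
    simpa [add_assoc] using Finset.sum_range_sub' (fun n : ℕ => (x + n)⁻¹) N
  simp_rw [hpartial]
  simpa using tendsto_const_nhds.sub (tendsto_inv_atTop_zero.comp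
    (tendsto_atTop_add_const_left _ x tendsto_natCast_atTop_atTop))

theorem summable_inv_add_sq {x : ℝ} (hx : 0 < x) : Summable (fun n : ℕ => ((x + n) ^ 2)⁻¹) := by
  refine (summable_nat_add_iff 1).mp <| (hasSum_inv_sub_inv_add_one hx).summable.of_nonneg_of_le
    (fun n => by positivity) fun n => ?_
  simpa [add_assoc] using inv_sq_add_one_le_inv_sub_inv (by positivity : 0 < x + n)

theorem trigammaSeries_eq_add_one {x : ℝ} (hx : 0 < x) :
    trigammaSeries x = (x ^ 2)⁻¹ + trigammaSeries (x + 1) := by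
  rw [trigammaSeries, (summable_inv_add_sq hx).tsum_eq_zero_add, trigammaSeries]
  simp only [Nat.cast_zero, add_zero, Nat.cast_succ, add_assoc, add_comm (1 : ℝ)]

theorem inv_le_trigammaSeries {x : ℝ} (hx : 0 < x) : x⁻¹ ≤ trigammaSeries x :=
  hasSum_le (fun n => inv_sub_inv_le_inv_sq (by positivity)) (hasSum_inv_sub_inv_add_one hx)
    (summable_inv_add_sq hx).hasSum

theorem trigammaSeries_le {x : ℝ} (hx : 0 < x) : trigammaSeries x ≤ (x ^ 2)⁻¹ + x⁻¹ := by
  rw [trigammaSeries_eq_add_one hx]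
  refine add_le_add_right (hasSum_le (fun n => ?_) (summable_inv_add_sq (by linarith)).hasSum
    (hasSum_inv_sub_inv_add_one hx)) _
  simpa [add_right_comm x 1] using inv_sq_add_one_le_inv_sub_inv (by positivity : 0 < x + n)

theorem trigammaSeries_add_trigammaSeries_add_half {x : ℝ} (hx : 0 < x) :
    trigammaSeries x + trigammaSeries (x + 1 / 2) = 4 * trigammaSeries (2 * x) := by
  set f : ℕ → ℝ := fun m => ((2 * x + m) ^ 2)⁻¹
  have heven : (fun k : ℕ => f (2 * k)) = fun k : ℕ => 4⁻¹ * ((x + k) ^ 2)⁻¹ := by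
    ext k
    simp only [f, Nat.cast_mul, Nat.cast_ofNat, ← mul_inv]
    ring_nf
  have hodd : (fun k : ℕ => f (2 * k + 1)) = fun k : ℕ => 4⁻¹ * ((x + 1 / 2 + k) ^ 2)⁻¹ := by
    ext k
    simp only [f, Nat.cast_add, Nat.cast_mul, Nat.cast_ofNat, Nat.cast_one, ← mul_inv]
    ring_nf
  have key := tsum_even_add_odd (f := f)
    (by rw [heven]; exact (summable_inv_add_sq hx).mul_left _)
    (by rw [hodd]; exact (summable_inv_add_sq (by linarith)).mul_left _)
  rw [heven, hodd, tsum_mul_left, tsum_mul_left] at key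
  rw [trigammaSeries, trigammaSeries, trigammaSeries, ← key]
  ring

theorem abs_le_of_add_one_eq_of_abs_le_on_Icc {l : ℝ → ℝ} {C : ℝ}
    (hper : ∀ x, 0 < x → l (x + 1) = l x) (hbdd : ∀ x ∈ Icc (1 : ℝ) 2, |l x| ≤ C)
    {x : ℝ} (hx : 0 < x) : |l x| ≤ C := by
  have hnat (n : ℕ) : ∀ {y}, 0 < y → l (y + n) = l y := by
    induction n with
    | zero => simp
    | succ n ih =>
      intro y hy
      rw [Nat.cast_succ, ← add_assoc, hper _ (by positivity), ih hy]
  have hfloor := Nat.floor_le hx.le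
  have hfloor' := Nat.lt_floor_add_one x
  have ht : x + 1 - ⌊x⌋₊ ∈ Icc (1 : ℝ) 2 := ⟨by linarith, by linarith⟩
  rw [← hper x hx, ← sub_add_cancel (x + 1) ⌊x⌋₊, hnat _ (by linarith)]
  exact hbdd _ ht

theorem eq_zero_of_duplication_of_abs_le {l : ℝ → ℝ} {C : ℝ}
    (hdup : ∀ x, 0 < x → l x + l (x + 1 / 2) = 4 * l (2 * x))
    (hbdd : ∀ x, 0 < x → |l x| ≤ C) {x : ℝ} (hx : 0 < x) : l x = 0 := by
  have hhalf (n : ℕ) : ∀ y, 0 < y → |l y| ≤ C * (1 / 2) ^ n := by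
    induction n with
    | zero => simpa using hbdd
    | succ n ih =>
      intro y hy
      have hsum := hdup (y / 2) (by positivity)
      rw [mul_div_cancel₀ y two_ne_zero] at hsum
      have h₁ := ih (y / 2) (by positivity)
      have h₂ := ih (y / 2 + 1 / 2) (by positivity)
      have := abs_add_le (l (y / 2)) (l (y / 2 + 1 / 2))
      rw [hsum, abs_mul, abs_of_pos four_pos] at this
      rw [pow_succ]
      linarith
  have hlim : Tendsto (fun n : ℕ => C * (1 / 2 : ℝ) ^ n) atTop (𝓝 0) := by
    simpa using (tendsto_pow_atTop_nhds_zero_of_lt_one (by norm_num : (0 : ℝ) ≤ 1 / 2)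
      (by norm_num)).const_mul C
  exact abs_nonpos_iff.mp (ge_of_tendsto' hlim fun n => hhalf n x hx)

theorem polygamma_one_add_one {x : ℝ} (hx : 0 < x) :
    polygamma 1 (x + 1) = polygamma 1 x - (x ^ 2)⁻¹ := by
  rw [polygamma_add_one 1 hx]
  norm_num [zpow_neg, sub_eq_add_neg]

theorem polygamma_one_eq_trigammaSeries {x : ℝ} (hx : 0 < x) :
    polygamma 1 x = trigammaSeries x := by
  set l := fun y => polygamma 1 y - trigammaSeries y
  have hper (y : ℝ) (hy : 0 < y) : l (y + 1) = l y := by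
    simp only [l, polygamma_one_add_one hy, trigammaSeries_eq_add_one hy]
    ring
  have hdup (y : ℝ) (hy : 0 < y) : l y + l (y + 1 / 2) = 4 * l (2 * y) := by
    have hψ := polygamma_add_polygamma_add_half 0 hy
    have hS := trigammaSeries_add_trigammaSeries_add_half hy
    simp only [l]
    linarith
  obtain ⟨C, hC⟩ := isCompact_Icc.exists_bound_of_continuousOn
    fun y (hy : y ∈ Icc (1 : ℝ) 2) =>
      (analyticOnNhd_polygamma 1 y (by simp; linarith [hy.1])).continuousAt.continuousWithinAt
  have hbdd (y : ℝ) (hy : y ∈ Icc (1 : ℝ) 2) : |l y| ≤ C + 2 := by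
    have hy₀ : 0 < y := by linarith [hy.1]
    have hS₀ : 0 ≤ trigammaSeries y := (inv_nonneg.mpr hy₀.le).trans (inv_le_trigammaSeries hy₀)
    have hS₂ : trigammaSeries y ≤ 2 := by
      linarith [trigammaSeries_le hy₀, inv_le_one_of_one_le₀ (one_le_pow₀ (n := 2) hy.1),
        inv_le_one_of_one_le₀ hy.1]
    have hψ := hC y hy
    rw [Real.norm_eq_abs] at hψ
    calc |l y| ≤ |polygamma 1 y| + |trigammaSeries y| := abs_sub _ _
      _ ≤ C + 2 := by rw [abs_of_nonneg hS₀]; linarith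
  exact sub_eq_zero.mp (eq_zero_of_duplication_of_abs_le hdup
    (fun y hy => abs_le_of_add_one_eq_of_abs_le_on_Icc hper hbdd hy) hx)

theorem abs_polygamma_one_sub_inv_le {x : ℝ} (hx : 0 < x) :
    |polygamma 1 x - x⁻¹| ≤ (x ^ 2)⁻¹ := by
  rw [polygamma_one_eq_trigammaSeries hx, abs_le]
  constructor
  · linarith [inv_le_trigammaSeries hx, inv_nonneg.mpr (sq_nonneg x)]
  · linarith [trigammaSeries_le hx]

theorem inv_add_inv_sub_four_mul_inv_add {a b : ℝ} (ha : 0 < a) (hb : 0 < b) :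
    a⁻¹ + b⁻¹ - 4 * (a + b)⁻¹ = (a - b) ^ 2 / (a * b * (a + b)) := by
  field_simp
  ring

theorem abs_add_sub_four_mul_le_of_abs_sub_inv_le {f : ℝ → ℝ}
    (hf : ∀ x, 0 < x → |f x - x⁻¹| ≤ (x ^ 2)⁻¹) {a b : ℝ} (ha : 0 < a) (hb : 0 < b) :
    |f a + f b - 4 * f (a + b)| ≤
      (a ^ 2)⁻¹ + (b ^ 2)⁻¹ + 4 * ((a + b) ^ 2)⁻¹ + (a - b) ^ 2 / (a * b * (a + b)) := by
  have hsplit : f a + f b - 4 * f (a + b) =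
      (f a - a⁻¹) + (f b - b⁻¹) - 4 * (f (a + b) - (a + b)⁻¹) +
        (a - b) ^ 2 / (a * b * (a + b)) := by
    rw [← inv_add_inv_sub_four_mul_inv_add ha hb]
    ring
  have ha' := abs_le.mp (hf a ha)
  have hb' := abs_le.mp (hf b hb)
  have hab' := abs_le.mp (hf (a + b) (add_pos ha hb))
  have hR : 0 ≤ (a - b) ^ 2 / (a * b * (a + b)) := by positivity
  rw [hsplit, abs_le]
  constructor <;> linarith

theorem trigamma_sum_bound (a b : ℝ) (ha : 0 < a) (hb : 0 < b) :
    |polygamma 1 a + polygamma 1 b - 4 * polygamma 1 (a + b)| ≤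
      (6 + (a - b) ^ 2 / min a b) / (min a b) ^ 2 := by
  set m := min a b
  have hm : 0 < m := lt_min ha hb
  have hma : m ≤ a := min_le_left a b
  have hmb : m ≤ b := min_le_right a b
  calc |polygamma 1 a + polygamma 1 b - 4 * polygamma 1 (a + b)|
      ≤ (a ^ 2)⁻¹ + (b ^ 2)⁻¹ + 4 * ((a + b) ^ 2)⁻¹ + (a - b) ^ 2 / (a * b * (a + b)) :=
        abs_add_sub_four_mul_le_of_abs_sub_inv_le (fun _ => abs_polygamma_one_sub_inv_le) ha hb
    _ ≤ (m ^ 2)⁻¹ + (m ^ 2)⁻¹ + 4 * ((2 * m) ^ 2)⁻¹ + (a - b) ^ 2 / (m * m * m) := by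
        gcongr <;> linarith
    _ = (3 + (a - b) ^ 2 / m) / m ^ 2 := by
        field_simp
        ring
    _ ≤ (6 + (a - b) ^ 2 / m) / m ^ 2 := by gcongr; norm_num
end
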